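/- arXiv:cs/0701122 — 4 statements merged into one kernel-verified Lean document; each statement's English description precedes it below -/
import Mathlib

section
/- (Minkowski–Weyl, generator direction) Let R, P ⊆ ℝⁿ be finite sets with 0 ∉ R. Then the set P = { Rρ + Pπ | ρ ∈ (ℝ≥0)^r, π ∈ (ℝ≥0)^p, Σπᵢ = 1 }, consisting of sums of a conic combination of elements of R and a convex combination of elements of P, is a closed convex polyhedron (a finite intersection of closed half-spaces). -/
/-- A closed convex polyhedron: the solution set of a finite system of
non-strict linear inequalities. -/
def IsPolyhedron {n : ℕ} (P : Set (Fin n → ℝ)) : Prop :=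
  ∃ (m : ℕ) (a : Fin m → Fin n → ℝ) (b : Fin m → ℝ),
    P = {v | ∀ i, b i ≤ ∑ j, a i j * v j}

lemma isPoly_fintype {n : ℕ} {ι : Type} [Fintype ι] (a : ι → Fin n → ℝ) (b : ι → ℝ) :
    IsPolyhedron {v | ∀ i, b i ≤ ∑ j, a i j * v j} := by
  refine ⟨Fintype.card ι, a ∘ (Fintype.equivFin ι).symm, b ∘ (Fintype.equivFin ι).symm, ?_⟩
  ext v
  simp only [Set.mem_setOf_eq, Function.comp_apply]
  exact ⟨fun h i => h _, fun h i => by simpa using h (Fintype.equivFin ι i)⟩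

/-- Fourier–Motzkin: key real-variable elimination lemma. -/
lemma fm_exists {m : ℕ} (A : Fin m → ℝ) (c : Fin m → ℝ) (b : Fin m → ℝ) :
    (∃ t : ℝ, ∀ i, b i ≤ A i + c i * t) ↔
      ((∀ i, c i = 0 → b i ≤ A i) ∧
       ∀ i i', 0 < c i → c i' < 0 → (-c i') * (b i - A i) ≤ c i * (A i' - b i')) := by
  constructor
  · rintro ⟨t, ht⟩
    refine ⟨fun i hi => by simpa [hi] using ht i, fun i i' hi hi' => ?_⟩
    have h1 := ht i
    have h2 := ht i'
    nlinarith
  · rintro ⟨h0, hp⟩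
    classical
    set U : Finset (Fin m) := Finset.univ.filter (fun i => c i < 0) with hU
    set L : Finset (Fin m) := Finset.univ.filter (fun i => 0 < c i) with hL
    by_cases hUne : U.Nonempty
    · refine ⟨U.inf' hUne (fun i => (A i - b i) / (-c i)), fun i => ?_⟩
      rcases lt_trichotomy (c i) 0 with hc | hc | hc
      · have hmem : i ∈ U := by simp [hU, hc]
        have hle : U.inf' hUne (fun i => (A i - b i) / (-c i)) ≤ (A i - b i) / (-c i) :=
          Finset.inf'_le _ hmem
        have hcpos : 0 < -c i := by linarith
        rw [le_div_iff₀ hcpos] at hle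
        nlinarith
      · simpa [hc] using h0 i hc
      · have hge : (b i - A i) / c i ≤ U.inf' hUne (fun i => (A i - b i) / (-c i)) := by
          apply Finset.le_inf'
          intro i' hi'
          have hci' : c i' < 0 := by simpa [hU] using hi'
          have := hp i i' hc hci'
          rw [div_le_div_iff₀ hc (by linarith : (0:ℝ) < -c i')]
          nlinarith
        rw [div_le_iff₀ hc] at hge
        nlinarith
    · by_cases hLne : L.Nonempty
      · refine ⟨L.sup' hLne (fun i => (b i - A i) / c i), fun i => ?_⟩
        rcases lt_trichotomy (c i) 0 with hc | hc | hc
        · exact absurd ⟨i, by simp [hU, hc]⟩ hUne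
        · simpa [hc] using h0 i hc
        · have hmem : i ∈ L := by simp [hL, hc]
          have hle : (b i - A i) / c i ≤ L.sup' hLne (fun i => (b i - A i) / c i) :=
            Finset.le_sup' (fun i => (b i - A i) / c i) hmem
          rw [div_le_iff₀ hc] at hle
          nlinarith
      · refine ⟨0, fun i => ?_⟩
        rcases lt_trichotomy (c i) 0 with hc | hc | hc
        · exact absurd ⟨i, by simp [hU, hc]⟩ hUne
        · simpa [hc] using h0 i hc
        · exact absurd ⟨i, by simp [hL, hc]⟩ hLne

/-- One step of Fourier–Motzkin: projecting out the last coordinate. -/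
lemma isPoly_proj_one {n : ℕ} (S : Set (Fin (n + 1) → ℝ)) (hS : IsPolyhedron S) :
    IsPolyhedron {x : Fin n → ℝ | ∃ t : ℝ, Fin.snoc x t ∈ S} := by
  classical
  obtain ⟨m, a, b, rfl⟩ := hS
  set c : Fin m → ℝ := fun i => a i (Fin.last n) with hc
  set A : Fin m → (Fin n → ℝ) → ℝ := fun i x => ∑ j : Fin n, a i j.castSucc * x j with hA
  have key : ∀ (x : Fin n → ℝ) (t : ℝ) (i : Fin m),
      (∑ j, a i j * (Fin.snoc x t : Fin (n+1) → ℝ) j) = A i x + c i * t := by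
    intro x t i
    rw [Fin.sum_univ_castSucc]
    simp [hA, hc]
  -- new system
  let ι : Type := Fin m ⊕ Fin m × Fin m
  let a' : ι → Fin n → ℝ := fun q => match q with
    | Sum.inl i => if c i = 0 then (fun j => a i j.castSucc) else 0
    | Sum.inr (i, i') => if 0 < c i ∧ c i' < 0 then
        (fun j => (-c i') * a i j.castSucc + c i * a i' j.castSucc) else 0
  let b' : ι → ℝ := fun q => match q with
    | Sum.inl i => if c i = 0 then b i else 0
    | Sum.inr (i, i') => if 0 < c i ∧ c i' < 0 then (-c i') * b i + c i * b i' else 0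
  have : {x : Fin n → ℝ | ∃ t : ℝ, Fin.snoc x t ∈ {v | ∀ i, b i ≤ ∑ j, a i j * v j}}
      = {x | ∀ q : ι, b' q ≤ ∑ j, a' q j * x j} := by
    ext x
    simp only [Set.mem_setOf_eq]
    have hiff : (∃ t : ℝ, ∀ i, b i ≤ A i x + c i * t) ↔ _ :=
      fm_exists (fun i => A i x) c b
    constructor
    · rintro ⟨t, ht⟩
      have hcond := hiff.mp ⟨t, fun i => by rw [← key x t i]; exact ht i⟩
      rintro (i | ⟨i, i'⟩)
      · by_cases h : c i = 0
        · simpa [a', b', h, hA] using hcond.1 i h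
        · simp [a', b', h]
      · by_cases h : 0 < c i ∧ c i' < 0
        · have := hcond.2 i i' h.1 h.2
          simp only [a', b']
          rw [if_pos h, if_pos h]
          have expand : ∑ j, ((-c i') * a i j.castSucc + c i * a i' j.castSucc) * x j
              = (-c i') * A i x + c i * A i' x := by
            simp [hA, Finset.mul_sum, add_mul, Finset.sum_add_distrib, mul_assoc]
          rw [expand]
          nlinarith
        · simp [a', b', h]
    · intro h
      have hcond : (∀ i, c i = 0 → b i ≤ A i x) ∧
          ∀ i i', 0 < c i → c i' < 0 →
            (-c i') * (b i - A i x) ≤ c i * (A i' x - b i') := by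
        constructor
        · intro i hci
          have := h (Sum.inl i)
          simpa [a', b', hci, hA] using this
        · intro i i' hi hi'
          have := h (Sum.inr (i, i'))
          simp only [a', b'] at this
          rw [if_pos ⟨hi, hi'⟩, if_pos ⟨hi, hi'⟩] at this
          have expand : ∑ j, ((-c i') * a i j.castSucc + c i * a i' j.castSucc) * x j
              = (-c i') * A i x + c i * A i' x := by
            simp [hA, Finset.mul_sum, add_mul, Finset.sum_add_distrib, mul_assoc]
          rw [expand] at this
          nlinarith
      obtain ⟨t, ht⟩ := hiff.mpr hcond
      exact ⟨t, fun i => by rw [key x t i]; exact ht i⟩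
  rw [this]
  exact isPoly_fintype a' b'

/-- Projecting out `k` trailing coordinates preserves being a polyhedron. -/
lemma isPoly_proj {n : ℕ} : ∀ (k : ℕ) (S : Set (Fin (n + k) → ℝ)), IsPolyhedron S →
    IsPolyhedron {x : Fin n → ℝ | ∃ y : Fin k → ℝ, Fin.append x y ∈ S}
  | 0, S, hS => by
    have : {x : Fin n → ℝ | ∃ y : Fin 0 → ℝ, Fin.append x y ∈ S} = S := by
      ext x
      simp only [Set.mem_setOf_eq]
      constructor
      · rintro ⟨y, hy⟩
        have : Fin.append x y = x := by
          funext q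
          have hy0 : y = Fin.elim0 := Subsingleton.elim _ _
          rw [hy0, Fin.append_elim0]
          rfl
        rwa [this] at hy
      · intro hx
        refine ⟨Fin.elim0, ?_⟩
        have : Fin.append x Fin.elim0 = x := by
          rw [Fin.append_elim0]; rfl
        rwa [this]
    rwa [this]
  | (k + 1), S, hS => by
    have h1 : IsPolyhedron {w : Fin (n + k) → ℝ | ∃ t : ℝ, Fin.snoc w t ∈ S} :=
      isPoly_proj_one S hS
    have h2 := isPoly_proj k _ h1
    have : {x : Fin n → ℝ | ∃ y : Fin k → ℝ,
        Fin.append x y ∈ {w : Fin (n + k) → ℝ | ∃ t : ℝ, Fin.snoc w t ∈ S}}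
        = {x : Fin n → ℝ | ∃ y : Fin (k + 1) → ℝ, Fin.append x y ∈ S} := by
      ext x
      simp only [Set.mem_setOf_eq]
      constructor
      · rintro ⟨y, t, ht⟩
        exact ⟨Fin.snoc y t, by rwa [Fin.append_snoc]⟩
      · rintro ⟨y, hy⟩
        refine ⟨Fin.init y, y (Fin.last k), ?_⟩
        rw [← Fin.append_snoc, Fin.snoc_init_self]
        exact hy
    rwa [this] at h2

lemma sum_split {n r p : ℕ} (u : Fin n → ℝ) (c : Fin r → ℝ) (d : Fin p → ℝ)
    (x : Fin n → ℝ) (ρ : Fin r → ℝ) (π : Fin p → ℝ) :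
    ∑ q : Fin (n + (r + p)),
        Fin.append u (Fin.append c d) q * Fin.append x (Fin.append ρ π) q
      = ∑ j, u j * x j + (∑ i, c i * ρ i + ∑ j, d j * π j) := by
  simp [Fin.sum_univ_add, Fin.append_left, Fin.append_right]

/-- Minkowski–Weyl, generator direction: the set of sums of a conic combination of the
rays `R` and a convex combination of the points `P` is a closed convex polyhedron. -/
theorem stmt9 {n r p : ℕ} (R : Fin r → Fin n → ℝ) (P : Fin p → Fin n → ℝ)
    (hR : ∀ i, R i ≠ 0) :
    IsPolyhedron {x : Fin n → ℝ | ∃ (ρ : Fin r → ℝ) (π : Fin p → ℝ),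
      (∀ i, 0 ≤ ρ i) ∧ (∀ j, 0 ≤ π j) ∧ ∑ j, π j = 1 ∧
      x = ∑ i, ρ i • R i + ∑ j, π j • P j} := by
  classical
  let ι : Type := (Fin r ⊕ Fin p) ⊕ (Bool ⊕ Fin n × Bool)
  let mk : (Fin n → ℝ) → (Fin r → ℝ) → (Fin p → ℝ) → (Fin (n + (r + p)) → ℝ) :=
    fun u c d => Fin.append u (Fin.append c d)
  let a : ι → Fin (n + (r + p)) → ℝ := fun q => match q with
    | Sum.inl (Sum.inl i) => mk 0 (fun i' => if i' = i then 1 else 0) 0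
    | Sum.inl (Sum.inr j) => mk 0 0 (fun j' => if j' = j then 1 else 0)
    | Sum.inr (Sum.inl true) => mk 0 0 (fun _ => 1)
    | Sum.inr (Sum.inl false) => mk 0 0 (fun _ => -1)
    | Sum.inr (Sum.inr (k, true)) =>
        mk (fun j => if j = k then 1 else 0) (fun i => -(R i k)) (fun j => -(P j k))
    | Sum.inr (Sum.inr (k, false)) =>
        mk (fun j => if j = k then -1 else 0) (fun i => R i k) (fun j => P j k)
  let b : ι → ℝ := fun q => match q with
    | Sum.inl _ => 0
    | Sum.inr (Sum.inl true) => 1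
    | Sum.inr (Sum.inl false) => -1
    | Sum.inr (Sum.inr _) => 0
  have hS : IsPolyhedron {v : Fin (n + (r + p)) → ℝ | ∀ q, b q ≤ ∑ j, a q j * v j} :=
    isPoly_fintype a b
  have hproj := isPoly_proj (r + p) _ hS
  have heq : {x : Fin n → ℝ | ∃ y : Fin (r + p) → ℝ,
      Fin.append x y ∈ {v : Fin (n + (r + p)) → ℝ | ∀ q, b q ≤ ∑ j, a q j * v j}}
      = {x : Fin n → ℝ | ∃ (ρ : Fin r → ℝ) (π : Fin p → ℝ),
        (∀ i, 0 ≤ ρ i) ∧ (∀ j, 0 ≤ π j) ∧ ∑ j, π j = 1 ∧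
        x = ∑ i, ρ i • R i + ∑ j, π j • P j} := by
    ext x
    simp only [Set.mem_setOf_eq]
    constructor
    · rintro ⟨y, hy⟩
      set ρ : Fin r → ℝ := fun i => y (Fin.castAdd p i) with hρ
      set π : Fin p → ℝ := fun j => y (Fin.natAdd r j) with hπ
      have hyap : y = Fin.append ρ π := by
        funext q
        refine Fin.addCases (fun i => ?_) (fun j => ?_) q
        · rw [Fin.append_left]
        · rw [Fin.append_right]
      rw [hyap] at hy
      have hρ0 : ∀ i, 0 ≤ ρ i := by
        intro i
        have := hy (Sum.inl (Sum.inl i))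
        rw [show (a (Sum.inl (Sum.inl i))) = mk 0 (fun i' => if i' = i then 1 else 0) 0 from rfl,
          sum_split] at this
        simpa [ite_mul, Finset.sum_ite_eq'] using this
      have hπ0 : ∀ j, 0 ≤ π j := by
        intro j
        have := hy (Sum.inl (Sum.inr j))
        rw [show (a (Sum.inl (Sum.inr j))) = mk 0 0 (fun j' => if j' = j then 1 else 0) from rfl,
          sum_split] at this
        simpa [ite_mul, Finset.sum_ite_eq'] using this
      have hπ1 : ∑ j, π j = 1 := by
        have h1 := hy (Sum.inr (Sum.inl true))
        have h2 := hy (Sum.inr (Sum.inl false))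
        rw [show (a (Sum.inr (Sum.inl true))) = mk 0 0 (fun _ => 1) from rfl, sum_split] at h1
        rw [show (a (Sum.inr (Sum.inl false))) = mk 0 0 (fun _ => -1) from rfl, sum_split] at h2
        simp only [Pi.zero_apply, zero_mul, Finset.sum_const_zero, one_mul, neg_mul,
          neg_one_mul, Finset.sum_neg_distrib, zero_add] at h1 h2
        have hb1 : b (Sum.inr (Sum.inl true)) = 1 := rfl
        have hb2 : b (Sum.inr (Sum.inl false)) = -1 := rfl
        rw [hb1] at h1; rw [hb2] at h2
        linarith
      refine ⟨ρ, π, hρ0, hπ0, hπ1, ?_⟩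
      funext k
      have h1 := hy (Sum.inr (Sum.inr (k, true)))
      have h2 := hy (Sum.inr (Sum.inr (k, false)))
      rw [show (a (Sum.inr (Sum.inr (k, true)))) =
          mk (fun j => if j = k then 1 else 0) (fun i => -(R i k)) (fun j => -(P j k)) from rfl,
        sum_split] at h1
      rw [show (a (Sum.inr (Sum.inr (k, false)))) =
          mk (fun j => if j = k then -1 else 0) (fun i => R i k) (fun j => P j k) from rfl,
        sum_split] at h2
      simp only [ite_mul, one_mul, zero_mul, neg_mul, Finset.sum_ite_eq',
        Finset.mem_univ, if_true, neg_one_mul, Finset.sum_neg_distrib] at h1 h2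
      have hb1 : b (Sum.inr (Sum.inr (k, true))) = 0 := rfl
      have hb2 : b (Sum.inr (Sum.inr (k, false))) = 0 := rfl
      rw [hb1] at h1; rw [hb2] at h2
      have hx : x k = ∑ i, ρ i * R i k + ∑ j, π j * P j k := by
        have e1 : ∀ i : Fin r, -(R i k) * ρ i = -(ρ i * R i k) := fun i => by ring
        have e2 : ∀ j : Fin p, -(P j k) * π j = -(π j * P j k) := fun j => by ring
        have e3 : ∀ i : Fin r, R i k * ρ i = ρ i * R i k := fun i => by ring
        have e4 : ∀ j : Fin p, P j k * π j = π j * P j k := fun j => by ring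
        simp only [e1, e2, e3, e4, Finset.sum_neg_distrib] at h1 h2
        linarith
      simp [hx, Finset.sum_apply]
    · rintro ⟨ρ, π, hρ0, hπ0, hπ1, hx⟩
      refine ⟨Fin.append ρ π, fun q => ?_⟩
      have hxk : ∀ k, x k = ∑ i, ρ i * R i k + ∑ j, π j * P j k := by
        intro k
        rw [hx]
        simp [Finset.sum_apply]
      match q with
      | Sum.inl (Sum.inl i) =>
        rw [show (a (Sum.inl (Sum.inl i))) = mk 0 (fun i' => if i' = i then 1 else 0) 0 from rfl,
          sum_split]
        simpa [ite_mul, Finset.sum_ite_eq'] using hρ0 i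
      | Sum.inl (Sum.inr j) =>
        rw [show (a (Sum.inl (Sum.inr j))) = mk 0 0 (fun j' => if j' = j then 1 else 0) from rfl,
          sum_split]
        simpa [ite_mul, Finset.sum_ite_eq'] using hπ0 j
      | Sum.inr (Sum.inl true) =>
        rw [show (a (Sum.inr (Sum.inl true))) = mk 0 0 (fun _ => 1) from rfl, sum_split]
        show (1:ℝ) ≤ _
        simp [hπ1]
      | Sum.inr (Sum.inl false) =>
        rw [show (a (Sum.inr (Sum.inl false))) = mk 0 0 (fun _ => -1) from rfl, sum_split]
        show (-1:ℝ) ≤ _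
        simp [neg_one_mul, Finset.sum_neg_distrib, hπ1]
      | Sum.inr (Sum.inr (k, true)) =>
        rw [show (a (Sum.inr (Sum.inr (k, true)))) =
            mk (fun j => if j = k then 1 else 0) (fun i => -(R i k)) (fun j => -(P j k)) from rfl,
          sum_split]
        show (0:ℝ) ≤ _
        simp only [ite_mul, one_mul, zero_mul, neg_mul, Finset.sum_ite_eq',
          Finset.mem_univ, if_true]
        rw [hxk k]
        have e1 : ∑ i : Fin r, R i k * ρ i = ∑ i : Fin r, ρ i * R i k := by
          exact Finset.sum_congr rfl fun i _ => mul_comm _ _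
        have e2 : ∑ j : Fin p, P j k * π j = ∑ j : Fin p, π j * P j k := by
          exact Finset.sum_congr rfl fun j _ => mul_comm _ _
        simp only [Finset.sum_neg_distrib]
        linarith
      | Sum.inr (Sum.inr (k, false)) =>
        rw [show (a (Sum.inr (Sum.inr (k, false)))) =
            mk (fun j => if j = k then -1 else 0) (fun i => R i k) (fun j => P j k) from rfl,
          sum_split]
        show (0:ℝ) ≤ _
        simp only [ite_mul, neg_one_mul, zero_mul, Finset.sum_ite_eq',
          Finset.mem_univ, if_true]
        rw [hxk k]
        have e3 : ∑ i : Fin r, R i k * ρ i = ∑ i : Fin r, ρ i * R i k := by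
          exact Finset.sum_congr rfl fun i _ => mul_comm _ _
        have e4 : ∑ j : Fin p, P j k * π j = ∑ j : Fin p, π j * P j k := by
          exact Finset.sum_congr rfl fun j _ => mul_comm _ _
        linarith
  rw [heq] at hproj
  exact hproj
end

section
/- (Minkowski–Weyl, constraint direction) Every nonempty closed convex polyhedron P ⊆ ℝⁿ (finite intersection of closed half-spaces) admits finite sets R, P₀ ⊆ ℝⁿ with 0 ∉ R such that P = { Rρ + P₀π | ρ ≥ 0, π ≥ 0, Σπᵢ = 1 }. -/
open Set Submodule

namespace PointedCone

variable {𝕜 E : Type*} [Field 𝕜] [LinearOrder 𝕜] [IsStrictOrderedRing 𝕜]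
  [AddCommGroup E] [Module 𝕜 E]

lemma apply_neg_or_eq_zero_of_mem_hull {s : Set E} {f : E →ₗ[𝕜] 𝕜} (hs : ∀ x ∈ s, f x < 0)
    {y : E} (hy : y ∈ hull 𝕜 s) : f y < 0 ∨ y = 0 := by
  induction hy using Submodule.span_induction with
  | mem x hx => exact .inl (hs x hx)
  | zero => exact .inr rfl
  | add x y _ _ hx hy =>
    rcases hx with hx | rfl <;> rcases hy with hy | rfl <;> simp_all [add_neg]
  | smul c x _ hx =>
    obtain ⟨c, hc⟩ := c
    rcases hc.eq_or_lt with rfl | hc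
    · simp
    rcases hx with hx | rfl
    · left; simpa [← Nonneg.coe_smul] using mul_neg_of_pos_of_neg hc hx
    · simp

variable (𝕜) in
/-- Bilinear over the nonnegative scalars so that `Submodule.map₂_span_span` applies to it. -/
def fourierMotzkin (f : E →ₗ[𝕜] 𝕜) : E →ₗ[{c : 𝕜 // 0 ≤ c}] E →ₗ[{c : 𝕜 // 0 ≤ c}] E :=
  LinearMap.mk₂ {c : 𝕜 // 0 ≤ c} (fun a b => f a • b - f b • a)
    (by intros; simp only [map_add]; module)
    (by intros; simp only [← Nonneg.coe_smul, map_smul]; module)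
    (by intros; simp only [map_add]; module)
    (by intros; simp only [← Nonneg.coe_smul, map_smul]; module)

lemma fourierMotzkin_apply (f : E →ₗ[𝕜] 𝕜) (a b : E) :
    fourierMotzkin 𝕜 f a b = f a • b - f b • a := rfl

lemma apply_fourierMotzkin (f : E →ₗ[𝕜] 𝕜) (a b : E) : f (fourierMotzkin 𝕜 f a b) = 0 := by
  simp [fourierMotzkin_apply, mul_comm]

theorem hull_inf_dual_singleton (s : Set E) (f : E →ₗ[𝕜] 𝕜) :
    hull 𝕜 s ⊓ dual .id {f} = hull 𝕜 ({x ∈ s | 0 ≤ f x} ∪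
      image2 (fun a b => fourierMotzkin 𝕜 f a b) {x ∈ s | 0 ≤ f x} {x ∈ s | f x < 0}) := by
  set T := {x ∈ s | 0 ≤ f x} ∪
    image2 (fun a b => fourierMotzkin 𝕜 f a b) {x ∈ s | 0 ≤ f x} {x ∈ s | f x < 0}
  have hnonneg : hull 𝕜 {x ∈ s | 0 ≤ f x} ≤ dual .id {f} :=
    span_le.2 fun x hx => by simpa using hx.2
  refine le_antisymm ?_ (span_le.2 (union_subset ?_ ?_))
  · rintro y ⟨hy, hfy⟩
    replace hfy : 0 ≤ f y := by simpa using hfy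
    have hs : s = {x ∈ s | 0 ≤ f x} ∪ {x ∈ s | f x < 0} := by
      ext x; simp only [mem_union, mem_ofPred_eq, ← and_or_left, le_or_gt, and_true]
    rw [hs, hull, span_union] at hy
    obtain ⟨a, ha, b, hb, rfl⟩ := mem_sup.1 hy
    have hfa : 0 ≤ f a := by simpa using hnonneg ha
    have haT : a ∈ hull 𝕜 T := span_mono subset_union_left ha
    rcases hfa.eq_or_lt with hfa | hfa
    · obtain rfl : b = 0 := (apply_neg_or_eq_zero_of_mem_hull (fun x hx => hx.2) hb).resolve_left
        (by simpa [← hfa] using hfy)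
      simpa using haT
    have hpair : fourierMotzkin 𝕜 f a b ∈ hull 𝕜 T := by
      refine span_mono subset_union_right ?_
      rw [← map₂_span_span]
      exact apply_mem_map₂ _ ha hb
    -- as `f a > 0`, this writes `a + b` as a nonnegative combination of elements of `hull 𝕜 T`
    have key : f a • (a + b) = f (a + b) • a + fourierMotzkin 𝕜 f a b := by
      rw [fourierMotzkin_apply, map_add]; module
    have : f a • (a + b) ∈ hull 𝕜 T := key ▸ add_mem (smul_mem _ hfy haT) hpair
    simpa [smul_smul, hfa.ne'] using smul_mem _ (inv_nonneg.2 hfa.le) this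
  · rintro x ⟨hx, hfx⟩
    exact ⟨subset_hull hx, by simpa using hfx⟩
  · rintro _ ⟨a, ⟨ha, hfa⟩, b, ⟨hb, hfb⟩, rfl⟩
    refine ⟨?_, by simp [apply_fourierMotzkin]⟩
    dsimp only
    rw [fourierMotzkin_apply, sub_eq_add_neg, ← neg_smul]
    exact add_mem (smul_mem _ hfa (subset_hull hb))
      (smul_mem _ (neg_nonneg.2 hfb.le) (subset_hull ha))

theorem FG.inf_dual_singleton {C : PointedCone 𝕜 E} (hC : C.FG) (f : E →ₗ[𝕜] 𝕜) :
    (C ⊓ dual .id {f}).FG := by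
  obtain ⟨S, rfl⟩ := hC
  have hS := S.finite_toSet
  exact (hull_inf_dual_singleton (S : Set E) f).symm ▸
    fg_span ((hS.sep _).union ((hS.sep _).image2 _ (hS.sep _)))

lemma fg_top [Module.Finite 𝕜 E] : (⊤ : PointedCone 𝕜 E).FG := by
  classical
  let b := Module.finBasis 𝕜 E
  refine ⟨Finset.univ.image b ∪ Finset.univ.image (-⇑b), eq_top_iff.2 fun x _ => ?_⟩
  rw [← b.sum_repr x]
  refine sum_mem fun i _ => ?_
  rcases le_total 0 (b.repr x i) with h | h
  · exact smul_mem _ h (subset_hull (by simp))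
  · rw [← neg_smul_neg]
    exact smul_mem _ (neg_nonneg.2 h) (subset_hull (by simp))

theorem DualFG.fg {M : Type*} [AddCommGroup M] [Module 𝕜 M] [Module.Finite 𝕜 E]
    {p : M →ₗ[𝕜] E →ₗ[𝕜] 𝕜} {C : PointedCone 𝕜 E} (hC : C.DualFG p) : C.FG := by
  classical
  obtain ⟨s, rfl⟩ := hC.id
  clear hC
  induction s using Finset.induction_on with
  | empty => simpa using fg_top
  | insert f s _ ih =>
    rw [Finset.coe_insert, dual_insert, inf_comm]
    exact FG.inf_dual_singleton ih f

lemma exists_rays_points_of_fg {C : PointedCone 𝕜 (E × 𝕜)} (hC : C.FG)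
    (hC₀ : ∀ z ∈ C, 0 ≤ z.2) :
    ∃ (r p : ℕ) (R : Fin r → E) (Q : Fin p → E), (∀ i, R i ≠ 0) ∧
      C = hull 𝕜 (range (fun i => (R i, (0 : 𝕜))) ∪ range (fun j => (Q j, (1 : 𝕜)))) := by
  obtain ⟨S, rfl⟩ := hC
  have hR : {u : E | u ≠ 0 ∧ (u, (0 : 𝕜)) ∈ S}.Finite :=
    (S.finite_toSet.image Prod.fst).subset fun u hu => ⟨_, hu.2, rfl⟩
  have hQ : ((fun z : E × 𝕜 => z.2⁻¹ • z.1) '' {z ∈ (S : Set (E × 𝕜)) | 0 < z.2}).Finite :=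
    (S.finite_toSet.sep _).image _
  obtain ⟨r, R, -, hR⟩ := hR.fin_param
  obtain ⟨p, Q, -, hQ⟩ := hQ.fin_param
  refine ⟨r, p, R, Q, fun i => (hR.subset ⟨i, rfl⟩).1, le_antisymm (span_le.2 fun z hz => ?_)
    (span_le.2 (union_subset ?_ ?_))⟩
  · rcases (hC₀ z (subset_hull hz)).eq_or_lt with hz₂ | hz₂
    · by_cases hz₁ : z.1 = 0
      · rw [show z = 0 from Prod.ext hz₁ hz₂.symm]
        exact zero_mem _
      obtain ⟨i, hi⟩ : z.1 ∈ range R := hR ▸ ⟨hz₁, by rwa [hz₂, Prod.mk.eta]⟩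
      exact subset_hull (.inl ⟨i, Prod.ext hi hz₂⟩)
    · obtain ⟨j, hj⟩ : z.2⁻¹ • z.1 ∈ range Q := hQ ▸ ⟨z, ⟨hz, hz₂⟩, rfl⟩
      have : z = z.2 • (Q j, (1 : 𝕜)) := by
        rw [hj, Prod.smul_mk, smul_inv_smul₀ hz₂.ne', smul_eq_mul, mul_one]
      exact this ▸ smul_mem _ hz₂.le (subset_hull (.inr ⟨j, rfl⟩))
  · rintro _ ⟨i, rfl⟩
    exact subset_hull (hR.subset ⟨i, rfl⟩).2
  · rintro _ ⟨j, rfl⟩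
    obtain ⟨z, ⟨hz, hz₂⟩, hzj⟩ := hQ.subset ⟨j, rfl⟩
    have : (Q j, (1 : 𝕜)) = z.2⁻¹ • z := by
      rw [← hzj, Prod.smul_mk, smul_eq_mul, inv_mul_cancel₀ hz₂.ne']
    dsimp only
    rw [this]
    exact smul_mem _ (inv_nonneg.2 hz₂.le) (subset_hull hz)

lemma mk_one_mem_hull_iff {r p : ℕ} (R : Fin r → E) (Q : Fin p → E) (x : E) :
    (x, (1 : 𝕜)) ∈ hull 𝕜 (range (fun i => (R i, (0 : 𝕜))) ∪ range (fun j => (Q j, (1 : 𝕜)))) ↔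
      ∃ (ρ : Fin r → 𝕜) (π : Fin p → 𝕜), (∀ i, 0 ≤ ρ i) ∧ (∀ j, 0 ≤ π j) ∧ ∑ j, π j = 1 ∧
        x = ∑ i, ρ i • R i + ∑ j, π j • Q j := by
  rw [← Sum.elim_range, mem_span_range_iff_exists_fun]
  constructor
  · rintro ⟨c, hc⟩
    refine ⟨fun i => c (.inl i), fun j => c (.inr j), fun i => (c _).2, fun j => (c _).2, ?_⟩
    simp only [Fintype.sum_sum_type, Sum.elim_inl, Sum.elim_inr, Prod.ext_iff, Prod.fst_add,
      Prod.snd_add, Prod.fst_sum, Prod.snd_sum, Prod.smul_fst, Prod.smul_snd, ← Nonneg.coe_smul,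
      smul_eq_mul, mul_zero, mul_one, Finset.sum_const_zero, zero_add] at hc
    exact ⟨hc.2, hc.1.symm⟩
  · rintro ⟨ρ, π, hρ, hπ, hπ₁, rfl⟩
    refine ⟨Sum.elim (fun i => ⟨ρ i, hρ i⟩) (fun j => ⟨π j, hπ j⟩), ?_⟩
    simp [Fintype.sum_sum_type, Prod.ext_iff, ← Nonneg.coe_smul, Prod.fst_sum, Prod.snd_sum, hπ₁]

end PointedCone

open PointedCone

theorem exists_rays_points_eq_setOf_le {𝕜 E ι : Type*} [Field 𝕜] [LinearOrder 𝕜]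
    [IsStrictOrderedRing 𝕜] [AddCommGroup E] [Module 𝕜 E] [Module.Finite 𝕜 E] [Finite ι]
    (a : ι → E →ₗ[𝕜] 𝕜) (b : ι → 𝕜) :
    ∃ (r p : ℕ) (R : Fin r → E) (Q : Fin p → E), (∀ i, R i ≠ 0) ∧
      {x | ∀ i, b i ≤ a i x} = {x | ∃ (ρ : Fin r → 𝕜) (π : Fin p → 𝕜), (∀ i, 0 ≤ ρ i) ∧
        (∀ j, 0 ≤ π j) ∧ ∑ j, π j = 1 ∧ x = ∑ i, ρ i • R i + ∑ j, π j • Q j} := by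
  let φ : ι → E × 𝕜 →ₗ[𝕜] 𝕜 := fun i => a i ∘ₗ .fst 𝕜 E 𝕜 - b i • .snd 𝕜 E 𝕜
  let C : PointedCone 𝕜 (E × 𝕜) := dual .id (insert (.snd 𝕜 E 𝕜) (range φ))
  have hC : C.FG := (DualFG.dual_of_finite .id ((finite_range φ).insert _)).fg
  obtain ⟨r, p, R, Q, hR, hCeq⟩ := exists_rays_points_of_fg hC fun z hz => hz (mem_insert _ _)
  refine ⟨r, p, R, Q, hR, Set.ext fun x => ?_⟩
  rw [mem_ofPred_eq, mem_ofPred_eq, ← mk_one_mem_hull_iff, ← hCeq]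
  simp [C, φ]

theorem stmt10_general {n : ℕ} (P : Set (Fin n → ℝ)) (hP : IsPolyhedron P) :
    ∃ (r p : ℕ) (R : Fin r → Fin n → ℝ) (P₀ : Fin p → Fin n → ℝ),
      (∀ i, R i ≠ 0) ∧
      P = {x : Fin n → ℝ | ∃ (ρ : Fin r → ℝ) (π : Fin p → ℝ),
        (∀ i, 0 ≤ ρ i) ∧ (∀ j, 0 ≤ π j) ∧ ∑ j, π j = 1 ∧
        x = ∑ i, ρ i • R i + ∑ j, π j • P₀ j} := by
  obtain ⟨m, a, b, rfl⟩ := hP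
  simpa using exists_rays_points_eq_setOf_le
    (fun i => ∑ j, a i j • LinearMap.proj (R := ℝ) (φ := fun _ : Fin n => ℝ) j) b

/-- Minkowski–Weyl, constraint direction: every nonempty closed convex polyhedron is
generated by finite sets of rays `R` (with `0 ∉ R`) and points `P₀`. -/
theorem stmt10 {n : ℕ} (P : Set (Fin n → ℝ)) (hP : IsPolyhedron P) (hne : P.Nonempty) :
    ∃ (r p : ℕ) (R : Fin r → Fin n → ℝ) (P₀ : Fin p → Fin n → ℝ),
      (∀ i, R i ≠ 0) ∧
      P = {x : Fin n → ℝ | ∃ (ρ : Fin r → ℝ) (π : Fin p → ℝ),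
        (∀ i, 0 ≤ ρ i) ∧ (∀ j, 0 ≤ π j) ∧ ∑ j, π j = 1 ∧
        x = ∑ i, ρ i • R i + ∑ j, π j • P₀ j} :=
  stmt10_general P hP
end

section
/- (NNC Minkowski–Weyl, generator direction) Let R, P, C ⊆ ℝⁿ be finite sets with 0 ∉ R and P nonempty. Then the set { Rρ + Pπ + Cγ | ρ ∈ (ℝ≥0)^r, π ∈ (ℝ≥0)^p with π ≠ 0, γ ∈ (ℝ≥0)^c, Σπᵢ + Σγⱼ = 1 } is a not-necessarily-closed polyhedron, i.e., a solution set of a finite system of strict and non-strict linear inequalities. Moreover every element of C belongs to the topological closure of this set. -/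
/-- An NNC (not necessarily closed) polyhedron: the solution set of a finite system of
constraints, each of the form `⟨aᵢ, x⟩ ≥ bᵢ` or `⟨aᵢ, x⟩ > bᵢ`. -/
def IsNNCPolyhedron {n : ℕ} (P : Set (Fin n → ℝ)) : Prop :=
  ∃ (m : ℕ) (a : Fin m → Fin n → ℝ) (b : Fin m → ℝ) (strict : Fin m → Bool),
    P = {v | ∀ i, if strict i then b i < ∑ j, a i j * v j else b i ≤ ∑ j, a i j * v j}



def rel (s : Bool) (u v : ℝ) : Prop := if s then u < v else u ≤ v

lemma rel_le {s u v} (h : rel s u v) : u ≤ v := by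
  cases s <;> simp [rel] at h <;> [exact h; exact le_of_lt h]

lemma rel_of_lt {s u v} (h : u < v) : rel s u v := by
  cases s <;> simp [rel] <;> [exact le_of_lt h; exact h]

lemma rel_true {u v : ℝ} : rel true u v ↔ u < v := by simp [rel]
lemma rel_false {u v : ℝ} : rel false u v ↔ u ≤ v := by simp [rel]

lemma core {ι₁ ι₂ : Type} [Fintype ι₁] [Fintype ι₂] (L : ι₁ → ℝ) (s₁ : ι₁ → Bool)
    (U : ι₂ → ℝ) (s₂ : ι₂ → Bool) :
    (∃ t : ℝ, (∀ i, rel (s₁ i) (L i) t) ∧ (∀ j, rel (s₂ j) t (U j))) ↔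
    ∀ i j, rel (s₁ i || s₂ j) (L i) (U j) := by
  constructor
  · rintro ⟨t, h1, h2⟩ i j
    have hi := h1 i; have hj := h2 j
    cases hsi : s₁ i <;> cases hsj : s₂ j <;>
      simp [rel, hsi, hsj] at hi hj ⊢ <;> linarith
  · intro h
    rcases isEmpty_or_nonempty ι₁ with h1 | h1
    · rcases isEmpty_or_nonempty ι₂ with h2 | h2
      · exact ⟨0, fun i => (IsEmpty.false i).elim, fun j => (IsEmpty.false j).elim⟩
      · refine ⟨(Finset.univ.inf' Finset.univ_nonempty U) - 1,
          fun i => (IsEmpty.false i).elim, fun j => rel_of_lt ?_⟩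
        have := Finset.inf'_le U (Finset.mem_univ j)
        linarith
    · rcases isEmpty_or_nonempty ι₂ with h2 | h2
      · refine ⟨(Finset.univ.sup' Finset.univ_nonempty L) + 1,
          fun i => rel_of_lt ?_, fun j => (IsEmpty.false j).elim⟩
        have := Finset.le_sup' L (Finset.mem_univ i)
        linarith
      · have hne1 : (Finset.univ : Finset ι₁).Nonempty := Finset.univ_nonempty
        have hne2 : (Finset.univ : Finset ι₂).Nonempty := Finset.univ_nonempty
        obtain ⟨i0, -, hi0⟩ := Finset.exists_mem_eq_sup' hne1 L
        obtain ⟨j0, -, hj0⟩ := Finset.exists_mem_eq_inf' hne2 U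
        have hML : ∀ i, L i ≤ Finset.univ.sup' hne1 L := fun i => Finset.le_sup' L (Finset.mem_univ i)
        have hNU : ∀ j, Finset.univ.inf' hne2 U ≤ U j := fun j => Finset.inf'_le U (Finset.mem_univ j)
        have hMN : Finset.univ.sup' hne1 L ≤ Finset.univ.inf' hne2 U := by
          rw [hi0, hj0]; exact rel_le (h i0 j0)
        rcases lt_or_eq_of_le hMN with hlt | heq
        · refine ⟨(Finset.univ.sup' hne1 L + Finset.univ.inf' hne2 U) / 2,
            fun i => rel_of_lt ?_, fun j => rel_of_lt ?_⟩
          · have := hML i; linarith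
          · have := hNU j; linarith
        · refine ⟨Finset.univ.sup' hne1 L, fun i => ?_, fun j => ?_⟩
          · cases hsi : s₁ i
            · rw [rel_false]; exact hML i
            · rw [rel_true]
              have h' := h i j0
              rw [hsi, Bool.true_or, rel_true] at h'
              rw [heq, hj0]; exact h'
          · cases hsj : s₂ j
            · rw [rel_false, heq]; exact hNU j
            · rw [rel_true]
              have h' := h i0 j
              rw [hsj, Bool.or_true, rel_true] at h'
              rw [hi0]; exact h'

def IsNNC' {m : ℕ} (S : Set (Fin m → ℝ)) : Prop :=
  ∃ (ι : Type) (_ : Fintype ι) (a : ι → Fin m → ℝ) (b : ι → ℝ) (st : ι → Bool),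
    S = {v | ∀ i, rel (st i) (b i) (∑ j, a i j * v j)}

section translations

lemma rel_lower {e : ℝ} (he : 0 < e) (s : Bool) (b f t : ℝ) :
    rel s b (f + e * t) ↔ rel s ((b - f) / e) t := by
  have hl : (b - f) / e * e = b - f := div_mul_cancel₀ _ (ne_of_gt he)
  cases s
  · rw [rel_false, rel_false]
    constructor <;> intro h <;> nlinarith [hl]
  · rw [rel_true, rel_true]
    constructor <;> intro h <;> nlinarith [hl]

lemma rel_upper {e : ℝ} (he : e < 0) (s : Bool) (b f t : ℝ) :
    rel s b (f + e * t) ↔ rel s t ((b - f) / e) := by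
  have hl : (b - f) / e * e = b - f := div_mul_cancel₀ _ (ne_of_lt he)
  cases s
  · rw [rel_false, rel_false]
    constructor <;> intro h <;> nlinarith [hl]
  · rw [rel_true, rel_true]
    constructor <;> intro h <;> nlinarith [hl]

lemma rel_pair {ei ej : ℝ} (hi : 0 < ei) (hj : ej < 0) (s : Bool) (bi bj fi fj : ℝ) :
    rel s (ei * bj - ej * bi) (ei * fj - ej * fi) ↔
      rel s ((bi - fi) / ei) ((bj - fj) / ej) := by
  set l := (bi - fi) / ei with hldef
  set u := (bj - fj) / ej with hudef
  have hfi : fi = bi - l * ei := by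
    have := div_mul_cancel₀ (bi - fi) (ne_of_gt hi); rw [← hldef] at this; linarith
  have hfj : fj = bj - u * ej := by
    have := div_mul_cancel₀ (bj - fj) (ne_of_lt hj); rw [← hudef] at this; linarith
  have key : ei * fj - ej * fi - (ei * bj - ej * bi) = (ei * ej) * (l - u) := by
    rw [hfi, hfj]; ring
  have hprod : ei * ej < 0 := mul_neg_of_pos_of_neg hi hj
  cases s
  · rw [rel_false, rel_false]
    constructor <;> intro h <;> nlinarith [key, hprod]
  · rw [rel_true, rel_true]
    constructor <;> intro h <;> nlinarith [key, hprod]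

end translations

lemma trichot {ι : Type} (e : ι → ℝ) (Cn : ι → Prop) :
    (∀ i, Cn i) ↔ ((∀ i : {i // e i = 0}, Cn i.1) ∧ (∀ i : {i // 0 < e i}, Cn i.1) ∧
      (∀ i : {i // e i < 0}, Cn i.1)) := by
  constructor
  · intro h; exact ⟨fun i => h i.1, fun i => h i.1, fun i => h i.1⟩
  · rintro ⟨h0, h1, h2⟩ i
    rcases lt_trichotomy (e i) 0 with h | h | h
    · exact h2 ⟨i, h⟩
    · exact h0 ⟨i, h⟩
    · exact h1 ⟨i, h⟩

lemma fm_step {m : ℕ} {S : Set (Fin (m+1) → ℝ)} (h : IsNNC' S) :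
    IsNNC' {x : Fin m → ℝ | ∃ t, Fin.snoc x t ∈ S} := by
  classical
  obtain ⟨ι, _, a, b, st, rfl⟩ := h
  set e : ι → ℝ := fun i => a i (Fin.last m) with he
  set f : ι → (Fin m → ℝ) → ℝ := fun i x => ∑ j, a i (Fin.castSucc j) * x j with hf
  refine ⟨{i // e i = 0} ⊕ {i // 0 < e i} × {i // e i < 0}, inferInstance,
    Sum.elim (fun i k => a i.1 k.castSucc)
      (fun q k => e q.1.1 * a q.2.1 k.castSucc - e q.2.1 * a q.1.1 k.castSucc),
    Sum.elim (fun i => b i.1) (fun q => e q.1.1 * b q.2.1 - e q.2.1 * b q.1.1),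
    Sum.elim (fun i => st i.1) (fun q => st q.1.1 || st q.2.1), ?_⟩
  ext x
  have hsum : ∀ i t, (∑ j, a i j * (Fin.snoc x t : Fin (m+1) → ℝ) j) = f i x + e i * t := by
    intro i t
    rw [Fin.sum_univ_castSucc]
    simp [hf, he]
  have hcomb : ∀ (i j : ι), ∑ k, (e i * a j k.castSucc - e j * a i k.castSucc) * x k
      = e i * f j x - e j * f i x := by
    intro i j
    simp only [hf, Finset.mul_sum, sub_mul, Finset.sum_sub_distrib]
    congr 1 <;> exact Finset.sum_congr rfl (fun k _ => by ring)
  simp only [Set.mem_setOf_eq]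
  constructor
  · rintro ⟨t, ht⟩ i'
    have key : ∀ i, rel (st i) (b i) (f i x + e i * t) := fun i => by rw [← hsum]; exact ht i
    rcases i' with ⟨i, hi⟩ | ⟨⟨i, hi⟩, ⟨j, hj⟩⟩
    · have := key i
      rw [hi, zero_mul, add_zero] at this
      simpa using this
    · have hL := (rel_lower hi (st i) (b i) (f i x) t).mp (key i)
      have hU := (rel_upper hj (st j) (b j) (f j x) t).mp (key j)
      have : rel (st i || st j) ((b i - f i x) / e i) ((b j - f j x) / e j) := by
        cases hsi : st i <;> cases hsj : st j <;>
          rw [hsi] at hL <;> rw [hsj] at hU <;>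
          simp only [Bool.or_self, Bool.false_or, Bool.true_or, rel_true, rel_false] at hL hU ⊢ <;>
          linarith
      rw [← rel_pair hi hj] at this
      simp only [Sum.elim_inr]
      rw [hcomb]
      exact this
  · intro hall
    have h0 : ∀ i : {i // e i = 0}, rel (st i.1) (b i.1) (f i.1 x) := fun i => by
      have := hall (Sum.inl i); simpa using this
    have hpair : ∀ (i : {i // 0 < e i}) (j : {i // e i < 0}),
        rel (st i.1 || st j.1) ((b i.1 - f i.1 x) / e i.1) ((b j.1 - f j.1 x) / e j.1) := by
      intro i j
      have := hall (Sum.inr (i, j))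
      simp only [Sum.elim_inr] at this
      rw [← rel_pair i.2 j.2, ← hcomb]
      exact this
    obtain ⟨t, htL, htU⟩ := (core (fun i : {i // 0 < e i} => (b i.1 - f i.1 x) / e i.1)
      (fun i => st i.1) (fun j : {i // e i < 0} => (b j.1 - f j.1 x) / e j.1)
      (fun j => st j.1)).mpr hpair
    refine ⟨t, ?_⟩
    intro i
    rw [hsum]
    rcases lt_trichotomy (e i) 0 with hlt | heq | hgt
    · rw [rel_upper hlt]; exact htU ⟨i, hlt⟩
    · rw [heq, zero_mul, add_zero]; exact h0 ⟨i, heq⟩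
    · rw [rel_lower hgt]; exact htL ⟨i, hgt⟩

lemma proj_many (d : ℕ) : ∀ (m : ℕ) (S : Set (Fin (m + d) → ℝ)), IsNNC' S →
    IsNNC' {x : Fin m → ℝ | ∃ y : Fin d → ℝ, Fin.append x y ∈ S} := by
  induction d with
  | zero =>
    intro m S hS
    have hset : {x : Fin m → ℝ | ∃ y : Fin 0 → ℝ, Fin.append x y ∈ S} = S := by
      ext x
      simp only [Set.mem_setOf_eq]
      have hax : ∀ y : Fin 0 → ℝ, Fin.append x y = x := by
        intro y
        have hy : y = Fin.elim0 := funext fun k => k.elim0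
        rw [hy, Fin.append_elim0]
        funext k; rfl
      constructor
      · rintro ⟨y, hy⟩; rwa [hax y] at hy
      · intro hx; exact ⟨Fin.elim0, by rwa [hax]⟩
    rw [hset]; exact hS
  | succ d ih =>
    intro m S hS
    have h1 : IsNNC' {z : Fin (m + d) → ℝ | ∃ t, Fin.snoc z t ∈ S} := fm_step hS
    have h2 := ih m _ h1
    have hset : {x : Fin m → ℝ | ∃ y : Fin (d+1) → ℝ, Fin.append x y ∈ S}
        = {x : Fin m → ℝ | ∃ y : Fin d → ℝ,
            Fin.append x y ∈ {z : Fin (m + d) → ℝ | ∃ t, Fin.snoc z t ∈ S}} := by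
      ext x
      simp only [Set.mem_setOf_eq]
      constructor
      · rintro ⟨y, hy⟩
        refine ⟨Fin.init y, y (Fin.last d), ?_⟩
        rw [← Fin.append_snoc, Fin.snoc_init_self]; exact hy
      · rintro ⟨y, t, hy⟩
        exact ⟨Fin.snoc y t, by rw [Fin.append_snoc]; exact hy⟩
    rw [hset]; exact h2

lemma forall_add {A B : ℕ} (Q : Fin (A + B) → Prop) :
    (∀ k, Q k) ↔ (∀ i : Fin A, Q (Fin.castAdd B i)) ∧ (∀ j : Fin B, Q (Fin.natAdd A j)) := by
  constructor
  · intro h; exact ⟨fun i => h _, fun j => h _⟩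
  · rintro ⟨h1, h2⟩ k
    exact Fin.addCases h1 h2 k

lemma append_decomp {A B : ℕ} (y : Fin (A + B) → ℝ) :
    Fin.append (fun i => y (Fin.castAdd B i)) (fun j => y (Fin.natAdd A j)) = y := by
  funext k
  refine Fin.addCases (fun i => ?_) (fun j => ?_) k
  · rw [Fin.append_left]
  · rw [Fin.append_right]

lemma IsNNC'.toPoly {m : ℕ} {S : Set (Fin m → ℝ)} (h : IsNNC' S) : IsNNCPolyhedron S := by
  obtain ⟨ι, hι, a, b, st, rfl⟩ := h
  set e := Fintype.equivFin ι with he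
  refine ⟨Fintype.card ι, fun i => a (e.symm i), fun i => b (e.symm i),
    fun i => st (e.symm i), ?_⟩
  ext v
  simp only [Set.mem_setOf_eq]
  constructor
  · intro h i
    simpa [rel] using h (e.symm i)
  · intro h i
    have := h (e i)
    simpa [rel] using this


/-- NNC Minkowski–Weyl, generator direction: the set of combinations
`Rρ + Pπ + Cγ` with `ρ, π, γ ≥ 0`, `π ≠ 0` and `Σπ + Σγ = 1` is an NNC polyhedron,
and every element of `C` (the closure points) lies in its topological closure. -/
theorem stmt17 {n r p c : ℕ} (R : Fin r → Fin n → ℝ) (P : Fin p → Fin n → ℝ)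
    (C : Fin c → Fin n → ℝ) (hR : ∀ i, R i ≠ 0) (hp : 0 < p)
    (G : Set (Fin n → ℝ))
    (hG : G = {x | ∃ (ρ : Fin r → ℝ) (π : Fin p → ℝ) (γ : Fin c → ℝ),
      (∀ i, 0 ≤ ρ i) ∧ (∀ j, 0 ≤ π j) ∧ (∀ k, 0 ≤ γ k) ∧ π ≠ 0 ∧
      (∑ j, π j) + (∑ k, γ k) = 1 ∧
      x = ∑ i, ρ i • R i + ∑ j, π j • P j + ∑ k, γ k • C k}) :
    IsNNCPolyhedron G ∧ ∀ k, C k ∈ closure G := by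
  classical
  constructor
  · -- polyhedron part
    set gen : Fin (r + p + c) → Fin n → ℝ := Fin.append (Fin.append R P) C with hgen
    set wπ : Fin (n + (r + p + c)) → ℝ :=
      Fin.append (0 : Fin n → ℝ)
        (Fin.append (Fin.append (0 : Fin r → ℝ) (1 : Fin p → ℝ)) (0 : Fin c → ℝ)) with hwπ
    set wσ : Fin (n + (r + p + c)) → ℝ :=
      Fin.append (0 : Fin n → ℝ)
        (Fin.append (Fin.append (0 : Fin r → ℝ) (1 : Fin p → ℝ)) (1 : Fin c → ℝ)) with hwσ
    set wx : Fin n → Fin (n + (r + p + c)) → ℝ :=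
      fun j => Fin.append (fun j' => if j' = j then (1:ℝ) else 0)
        (fun k => -(gen k j)) with hwx
    set a : ((Fin (r + p + c) ⊕ Fin 1) ⊕ (Bool ⊕ Fin n × Bool)) → Fin (n + (r + p + c)) → ℝ :=
      Sum.elim
        (Sum.elim (fun k0 => fun k => if k = Fin.natAdd n k0 then 1 else 0) (fun _ => wπ))
        (Sum.elim (fun s => cond s (-wσ) wσ)
          (fun q => cond q.2 (-(wx q.1)) (wx q.1))) with ha
    set b : ((Fin (r + p + c) ⊕ Fin 1) ⊕ (Bool ⊕ Fin n × Bool)) → ℝ :=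
      Sum.elim (Sum.elim (fun _ => 0) (fun _ => 0))
        (Sum.elim (fun s => cond s (-1) 1) (fun _ => 0)) with hb
    set st : ((Fin (r + p + c) ⊕ Fin 1) ⊕ (Bool ⊕ Fin n × Bool)) → Bool :=
      Sum.elim (Sum.elim (fun _ => false) (fun _ => true)) (fun _ => false) with hst
    set S : Set (Fin (n + (r + p + c)) → ℝ) :=
      {v | ∀ i, rel (st i) (b i) (∑ k, a i k * v k)} with hS
    have hSnnc : IsNNC' S := ⟨_, inferInstance, a, b, st, rfl⟩
    have key := proj_many (r + p + c) n S hSnnc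
    -- sum computations
    have hval : ∀ (x : Fin n → ℝ) (y : Fin (r + p + c) → ℝ) (k0 : Fin (r + p + c)),
        ∑ k, (if k = Fin.natAdd n k0 then (1:ℝ) else 0) * Fin.append x y k = y k0 := by
      intro x y k0
      rw [Finset.sum_eq_single (Fin.natAdd n k0)]
      · simp [Fin.append_right]
      · intro k _ hk; simp [hk]
      · simp
    have hπs : ∀ (x : Fin n → ℝ) (ρ : Fin r → ℝ) (π : Fin p → ℝ) (γ : Fin c → ℝ),
        ∑ k, wπ k * Fin.append x (Fin.append (Fin.append ρ π) γ) k = ∑ j, π j := by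
      intro x ρ π γ
      rw [hwπ]
      rw [Fin.sum_univ_add]
      simp [Fin.sum_univ_add, Fin.append_left, Fin.append_right]
    have hσs : ∀ (x : Fin n → ℝ) (ρ : Fin r → ℝ) (π : Fin p → ℝ) (γ : Fin c → ℝ),
        ∑ k, wσ k * Fin.append x (Fin.append (Fin.append ρ π) γ) k
          = (∑ j, π j) + (∑ k, γ k) := by
      intro x ρ π γ
      rw [hwσ]
      rw [Fin.sum_univ_add]
      simp [Fin.sum_univ_add, Fin.append_left, Fin.append_right]
    have hxs : ∀ (x : Fin n → ℝ) (ρ : Fin r → ℝ) (π : Fin p → ℝ) (γ : Fin c → ℝ) (j : Fin n),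
        ∑ k, wx j k * Fin.append x (Fin.append (Fin.append ρ π) γ) k
          = x j - (∑ i, ρ i * R i j + ∑ j', π j' * P j' j + ∑ k, γ k * C k j) := by
      intro x ρ π γ j
      rw [hwx, hgen]
      simp only [Fin.sum_univ_add, Fin.append_left, Fin.append_right, ite_mul, one_mul,
        zero_mul, Finset.sum_ite_eq', Finset.mem_univ, if_true, neg_mul,
        Finset.sum_neg_distrib]
      ring_nf
      rw [Finset.sum_congr rfl fun i (_ : i ∈ Finset.univ) => mul_comm (R i j) (ρ i),
        Finset.sum_congr rfl fun j' (_ : j' ∈ Finset.univ) => mul_comm (P j' j) (π j'),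
        Finset.sum_congr rfl fun k (_ : k ∈ Finset.univ) => mul_comm (C k j) (γ k)]
    -- the set equality
    have hset : G = {x : Fin n → ℝ | ∃ y : Fin (r + p + c) → ℝ, Fin.append x y ∈ S} := by
      rw [hG]
      ext x
      simp only [Set.mem_setOf_eq]
      constructor
      · rintro ⟨ρ, π, γ, h1, h2, h3, h4, h5, h6⟩
        refine ⟨Fin.append (Fin.append ρ π) γ, ?_⟩
        intro i
        have hx6 : ∀ j, x j = ∑ i, ρ i * R i j + ∑ j', π j' * P j' j + ∑ k, γ k * C k j := by
          intro j
          have := congrFun h6 j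
          simpa [Finset.sum_apply, Pi.smul_apply, smul_eq_mul] using this
        rcases i with (k0 | u) | (s | ⟨j, s⟩)
        · simp only [hS, ha, hb, hst, Sum.elim_inl, Sum.elim_inr]
          rw [rel_false, hval]
          refine Fin.addCases (fun i2 => ?_) (fun k2 => ?_) k0
          · refine Fin.addCases (fun i3 => ?_) (fun j3 => ?_) i2 <;>
              simp [Fin.append_left, Fin.append_right]
            · exact h1 i3
            · exact h2 j3
          · simp [Fin.append_right]; exact h3 k2
        · simp only [hS, ha, hb, hst, Sum.elim_inl, Sum.elim_inr]
          rw [rel_true, hπs]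
          obtain ⟨j0, hj0⟩ := Function.ne_iff.mp h4
          have : 0 < π j0 := lt_of_le_of_ne (h2 j0) (Ne.symm hj0)
          exact lt_of_lt_of_le this (Finset.single_le_sum (fun j _ => h2 j) (Finset.mem_univ j0))
        · cases s
          · simp only [hS, ha, hb, hst, Sum.elim_inl, Sum.elim_inr, Bool.cond_false]
            rw [rel_false, hσs, h5]
          · simp only [hS, ha, hb, hst, Sum.elim_inl, Sum.elim_inr, Bool.cond_true]
            rw [rel_false]
            simp only [Pi.neg_apply, neg_mul]
            rw [Finset.sum_neg_distrib, hσs, h5]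
        · cases s
          · simp only [hS, ha, hb, hst, Sum.elim_inl, Sum.elim_inr, Bool.cond_false]
            rw [rel_false, hxs, hx6 j]
            simp
          · simp only [hS, ha, hb, hst, Sum.elim_inl, Sum.elim_inr, Bool.cond_true]
            rw [rel_false]
            simp only [Pi.neg_apply, neg_mul]
            rw [Finset.sum_neg_distrib, hxs, hx6 j]
            simp
      · rintro ⟨y, hy⟩
        set ρ : Fin r → ℝ := fun i => y (Fin.castAdd c (Fin.castAdd p i)) with hρ
        set π : Fin p → ℝ := fun j => y (Fin.castAdd c (Fin.natAdd r j)) with hπ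
        set γ : Fin c → ℝ := fun k => y (Fin.natAdd (r + p) k) with hγ
        have hde : Fin.append (Fin.append ρ π) γ = y := by
          have h2 : Fin.append ρ π = fun i : Fin (r + p) => y (Fin.castAdd c i) := by
            funext i
            refine Fin.addCases (fun i3 => ?_) (fun j3 => ?_) i <;>
              simp [Fin.append_left, Fin.append_right, hρ, hπ]
          rw [h2]
          exact append_decomp y
        refine ⟨ρ, π, γ, ?_, ?_, ?_, ?_, ?_, ?_⟩
        · intro i
          have := hy ((Sum.inl (Sum.inl (Fin.castAdd c (Fin.castAdd p i)))))
          simp only [hS, ha, hb, hst, Sum.elim_inl, Set.mem_setOf_eq] at this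
          rw [rel_false, hval] at this
          exact this
        · intro j
          have := hy ((Sum.inl (Sum.inl (Fin.castAdd c (Fin.natAdd r j)))))
          simp only [hS, ha, hb, hst, Sum.elim_inl, Set.mem_setOf_eq] at this
          rw [rel_false, hval] at this
          exact this
        · intro k
          have := hy ((Sum.inl (Sum.inl (Fin.natAdd (r + p) k))))
          simp only [hS, ha, hb, hst, Sum.elim_inl, Set.mem_setOf_eq] at this
          rw [rel_false, hval] at this
          exact this
        · -- π ≠ 0
          have := hy (Sum.inl (Sum.inr 0))
          simp only [hS, ha, hb, hst, Sum.elim_inl, Sum.elim_inr, Set.mem_setOf_eq] at this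
          rw [rel_true, ← hde, hπs] at this
          intro h0
          rw [h0] at this
          simp at this
        · -- sum = 1
          have hA := hy (Sum.inr (Sum.inl false))
          have hB := hy (Sum.inr (Sum.inl true))
          simp only [hS, ha, hb, hst, Sum.elim_inl, Sum.elim_inr, Set.mem_setOf_eq,
            Bool.cond_false, Bool.cond_true] at hA hB
          rw [rel_false, ← hde, hσs] at hA
          rw [rel_false] at hB
          simp only [Pi.neg_apply, neg_mul] at hB
          rw [Finset.sum_neg_distrib, ← hde, hσs] at hB
          linarith
        · -- x equation
          funext j
          have hA := hy (Sum.inr (Sum.inr (j, false)))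
          have hB := hy (Sum.inr (Sum.inr (j, true)))
          simp only [hS, ha, hb, hst, Sum.elim_inl, Sum.elim_inr, Set.mem_setOf_eq,
            Bool.cond_false, Bool.cond_true] at hA hB
          rw [rel_false, ← hde, hxs] at hA
          rw [rel_false] at hB
          simp only [Pi.neg_apply, neg_mul] at hB
          rw [Finset.sum_neg_distrib, ← hde, hxs] at hB
          simp only [Finset.sum_apply, Pi.add_apply, Pi.smul_apply, smul_eq_mul]
          linarith
    rw [hset]
    exact key.toPoly
  · -- closure part
    intro k
    set j0 : Fin p := ⟨0, hp⟩ with hj0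
    have hmem : ∀ s : ℕ, ((1:ℝ)/(s+1)) • P j0 + (1 - (1:ℝ)/(s+1)) • C k ∈ G := by
      intro s
      rw [hG]
      have hε : 0 < (1:ℝ)/(s+1) := by positivity
      have hε1 : (1:ℝ)/(s+1) ≤ 1 := by
        rw [div_le_one (by positivity)]
        have : (0:ℝ) ≤ s := Nat.cast_nonneg s
        linarith
      refine ⟨0, fun j => if j = j0 then (1:ℝ)/(s+1) else 0,
        fun k' => if k' = k then 1 - (1:ℝ)/(s+1) else 0, ?_, ?_, ?_, ?_, ?_, ?_⟩
      · intro i; simp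
      · intro j
        show (0:ℝ) ≤ if j = j0 then (1:ℝ)/(s+1) else 0
        split_ifs
        · positivity
        · exact le_refl _
      · intro k'
        show (0:ℝ) ≤ if k' = k then 1 - (1:ℝ)/(s+1) else 0
        split_ifs
        · linarith
        · exact le_refl _
      · intro h0
        have h00 : (1:ℝ)/(s+1) = 0 := by simpa using congrFun h0 j0
        exact absurd h00 (ne_of_gt hε)
      · simp [Finset.sum_ite_eq']
      · simp [ite_smul, Finset.sum_ite_eq']
    have htend : Filter.Tendsto
        (fun s : ℕ => ((1:ℝ)/(s+1)) • P j0 + (1 - (1:ℝ)/(s+1)) • C k)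
        Filter.atTop (nhds (C k)) := by
      have h0 : Filter.Tendsto (fun s : ℕ => (1:ℝ)/(s+1)) Filter.atTop (nhds 0) :=
        tendsto_one_div_add_atTop_nhds_zero_nat
      have := (h0.smul_const (P j0)).add (((tendsto_const_nhds (x := (1:ℝ))).sub h0).smul_const (C k))
      simpa using this
    exact mem_closure_of_tendsto htend (Filter.Eventually.of_forall hmem)
end

section
/- Let D be a join-semilattice with bottom, ∇ a widening operator on D, and A : D → D monotone. Then the iteration sequence d₀ = ⊥, d_{i+1} = d_i if A(d_i) ≤ d_i and d_{i+1} = d_i ∇ (d_i ⊔ A(d_i)) otherwise, is eventually stationary, and its limit d satisfies A(d) ≤ d (it is a post-fixpoint of A). -/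
/-- The chain `d₀ = e 0`, `d_{i+1} = W d_i (d_i ⊔ e (i+1))` used in the definition of a
widening operator. -/
def wChain {D : Type*} [SemilatticeSup D] (W : D → D → D) (e : ℕ → D) : ℕ → D
  | 0 => e 0
  | i + 1 => W (wChain W e i) (wChain W e i ⊔ e (i + 1))

open Classical in
/-- The upward iteration sequence with widening for an operator `A`:
`d₀ = ⊥`; `d_{i+1} = d_i` if `A d_i ≤ d_i`, and `d_{i+1} = d_i ∇ (d_i ⊔ A d_i)`
otherwise. -/
noncomputable def iterSeq {D : Type*} [SemilatticeSup D] [OrderBot D]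
    (A : D → D) (W : D → D → D) : ℕ → D
  | 0 => ⊥
  | i + 1 =>
    if A (iterSeq A W i) ≤ iterSeq A W i then iterSeq A W i
    else W (iterSeq A W i) (iterSeq A W i ⊔ A (iterSeq A W i))

/-- For a monotone operator `A` on a join-semilattice with bottom and a widening `∇`
(covering: `d ≤ e → e ≤ d ∇ e`; termination: every widened chain stabilizes), the
upward iteration sequence with widening is eventually stationary and its limit is a
post-fixpoint of `A`. -/
theorem stmt18 {D : Type*} [SemilatticeSup D] [OrderBot D]
    (W : D → D → D) (A : D → D) (hA : Monotone A)
    (hW1 : ∀ d e : D, d ≤ e → e ≤ W d e)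
    (hW2 : ∀ e : ℕ → D, Monotone e → ∃ N, ∀ i ≥ N, wChain W e i = wChain W e N) :
    ∃ N, (∀ i ≥ N, iterSeq A W i = iterSeq A W N) ∧
      A (iterSeq A W N) ≤ iterSeq A W N := by
  -- the iteration sequence is increasing step-wise
  have hstep : ∀ i, iterSeq A W i ≤ iterSeq A W (i + 1) := by
    intro i
    by_cases h : A (iterSeq A W i) ≤ iterSeq A W i
    · simp [iterSeq, h]
    · simp only [iterSeq, if_neg h]
      exact le_trans le_sup_left (hW1 _ _ le_sup_left)
  have hmono : Monotone (iterSeq A W) := monotone_nat_of_le_succ hstep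
  by_cases hex : ∃ k, A (iterSeq A W k) ≤ iterSeq A W k
  · obtain ⟨k, hk⟩ := hex
    refine ⟨k, ?_, hk⟩
    have hconst : ∀ m, iterSeq A W (k + m) = iterSeq A W k := by
      intro m
      induction m with
      | zero => rfl
      | succ m ih =>
        have : iterSeq A W (k + (m + 1)) = iterSeq A W (k + m) := by
          show iterSeq A W ((k + m) + 1) = iterSeq A W (k + m)
          simp [iterSeq, ih, hk]
        rw [this, ih]
    intro i hi
    obtain ⟨m, rfl⟩ := Nat.exists_eq_add_of_le hi
    exact hconst m
  · push_neg at hex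
    -- sequence never stops; relate it to a widened chain
    set e : ℕ → D := fun i => Nat.rec (⊥ : D) (fun j _ => A (iterSeq A W j)) i with he
    have hemono : Monotone e := by
      apply monotone_nat_of_le_succ
      intro i
      cases i with
      | zero => exact bot_le
      | succ j => exact hA (hstep j)
    have heq : ∀ i, wChain W e i = iterSeq A W i := by
      intro i
      induction i with
      | zero => rfl
      | succ j ih =>
        show W (wChain W e j) (wChain W e j ⊔ A (iterSeq A W j)) = iterSeq A W (j + 1)
        rw [ih]
        simp [iterSeq, if_neg (hex j)]
    obtain ⟨N, hN⟩ := hW2 e hemono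
    -- contradiction: at N the chain stabilizes but must strictly increase
    exfalso
    have h1 : iterSeq A W (N + 1) = iterSeq A W N := by
      rw [← heq, ← heq]; exact hN (N + 1) (Nat.le_succ N)
    have h2 : A (iterSeq A W N) ≤ iterSeq A W (N + 1) := by
      simp only [iterSeq, if_neg (hex N)]
      exact le_trans le_sup_right (hW1 _ _ le_sup_left)
    exact hex N (h1 ▸ h2)
end
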